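/- Let M be a reduced atomic additive submonoid of ℤ^d whose conic hull in ℚ^d is simplicial, i.e., the conic hull of a linearly independent set of vectors. Then the number of strong atoms of M is at most the rank of M (the dimension of ℚ ⊗ gp(M)). -/

import Mathlib

/-- An element `x` is a unit in the additive submonoid `M` if both `x` and `-x` lie in `M`. -/
def AddIsUnitIn {G : Type*} [AddCommGroup G] (M : AddSubmonoid G) (x : G) : Prop :=
  x ∈ M ∧ -x ∈ M

/-- `a` is an atom of `M`: a non-unit element of `M` that is not a sum of two non-units of `M`. -/
def AddIsAtomIn {G : Type*} [AddCommGroup G] (M : AddSubmonoid G) (a : G) : Prop :=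
  a ∈ M ∧ ¬ AddIsUnitIn M a ∧
    ∀ b c : G, b ∈ M → c ∈ M → a = b + c → AddIsUnitIn M b ∨ AddIsUnitIn M c

/-- `M` is atomic: every non-unit element of `M` is a finite sum of atoms of `M`. -/
def AddIsAtomicIn {G : Type*} [AddCommGroup G] (M : AddSubmonoid G) : Prop :=
  ∀ x ∈ M, ¬ AddIsUnitIn M x →
    ∃ s : Multiset G, (∀ a ∈ s, AddIsAtomIn M a) ∧ s.sum = x

/-- `a` is a strong atom of `M`: an atom all of whose multiples `n • a` factor uniquely
into atoms of `M` (namely as `n` copies of `a`). -/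
def AddIsStrongAtomIn {G : Type*} [AddCommGroup G] (M : AddSubmonoid G) (a : G) : Prop :=
  AddIsAtomIn M a ∧ ∀ n : ℕ, 0 < n → ∀ s : Multiset G,
    (∀ b ∈ s, AddIsAtomIn M b) → s.sum = n • a → s = Multiset.replicate n a

/-- `p` is a prime element of `M`: a non-unit of `M` such that whenever `p` divides
`b + c` in `M`, it divides `b` or `c` in `M`. -/
def AddIsPrimeIn {G : Type*} [AddCommGroup G] (M : AddSubmonoid G) (p : G) : Prop :=
  p ∈ M ∧ ¬ AddIsUnitIn M p ∧
    ∀ b c : G, b ∈ M → c ∈ M → (∃ d ∈ M, b + c = p + d) →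
      (∃ d ∈ M, b = p + d) ∨ (∃ d ∈ M, c = p + d)

/-- Componentwise coercion of an integer vector to a rational vector. -/
def coeZQ {d : ℕ} (v : Fin d → ℤ) : Fin d → ℚ := fun i => (v i : ℚ)

/-- The conic hull of a set `S ⊆ ℚ^d`: all finite nonnegative rational combinations
of elements of `S`. -/
def conicHullQ {d : ℕ} (S : Set (Fin d → ℚ)) : Set (Fin d → ℚ) :=
  {y | ∃ (n : ℕ) (c : Fin n → ℚ) (v : Fin n → Fin d → ℚ),
    (∀ i, 0 ≤ c i ∧ v i ∈ S) ∧ y = ∑ i, c i • v i}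

/-- A (convex) cone in `ℚ^d`: a nonempty set closed under nonnegative combinations. -/
def IsConvexConeQ {d : ℕ} (C : Set (Fin d → ℚ)) : Prop :=
  C.Nonempty ∧ ∀ x ∈ C, ∀ y ∈ C, ∀ a b : ℚ, 0 ≤ a → 0 ≤ b → a • x + b • y ∈ C

/-- `F` is a face of the cone `C`: a subcone such that whenever an open segment between
two points of `C` meets `F`, both endpoints lie in `F`. -/
def IsFaceOfQ {d : ℕ} (C F : Set (Fin d → ℚ)) : Prop :=
  F ⊆ C ∧ IsConvexConeQ F ∧
    ∀ x ∈ C, ∀ y ∈ C, (∃ t : ℚ, 0 < t ∧ t < 1 ∧ t • x + (1 - t) • y ∈ F) → x ∈ F ∧ y ∈ F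

/-!
A strong atom `a` spans an extreme ray of the rational cone of `M`: if `x + y = a` inside the
cone, clearing denominators gives `N' • m + N • m' = (N * N') • a` with `m, m' ∈ M`, and the
unique factorization of the multiples of `a` forces `m` to be a multiple of `a`. The extreme rays
of a simplicial cone are its `k` generating rays, and two strong atoms on the same ray coincide,
because a common multiple of them factors uniquely. Hence there are at most `k` strong atoms, and
`k` is the dimension of the rational span of `M`.
-/

open Submodule

lemma coeZQ_injective {d : ℕ} : Function.Injective (coeZQ (d := d)) :=
  fun _ _ h => funext fun i => Int.cast_injective (congrFun h i)

@[simp]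
lemma coeZQ_zero {d : ℕ} : coeZQ (0 : Fin d → ℤ) = 0 := by
  funext i; simp [coeZQ]

lemma coeZQ_add {d : ℕ} (a b : Fin d → ℤ) : coeZQ (a + b) = coeZQ a + coeZQ b := by
  funext i; simp [coeZQ]

lemma coeZQ_nsmul {d : ℕ} (n : ℕ) (a : Fin d → ℤ) : coeZQ (n • a) = n • coeZQ a := by
  funext i; simp [coeZQ]

lemma conicHullQ_eq_hull {d : ℕ} (S : Set (Fin d → ℚ)) :
    conicHullQ S = PointedCone.hull ℚ S := by
  ext y
  simp only [conicHullQ, Set.mem_ofPred_eq, SetLike.mem_coe, mem_span_set']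
  constructor
  · rintro ⟨n, c, w, hcw, rfl⟩
    exact ⟨n, fun i => ⟨c i, (hcw i).1⟩, fun i => ⟨w i, (hcw i).2⟩, rfl⟩
  · rintro ⟨n, c, w, rfl⟩
    exact ⟨n, fun i => c i, fun i => w i, fun i => ⟨(c i).2, (w i).2⟩, rfl⟩

section Monoid

variable {G : Type*} [AddCommGroup G] {M : AddSubmonoid G}

lemma AddIsAtomicIn.exists_multiset_sum_eq (hred : ∀ x ∈ M, -x ∈ M → x = 0)
    (hatomic : AddIsAtomicIn M) {x : G} (hx : x ∈ M) :
    ∃ s : Multiset G, (∀ b ∈ s, AddIsAtomIn M b) ∧ s.sum = x := by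
  by_cases hx0 : x = 0
  · exact ⟨0, by simp, by simp [hx0]⟩
  · exact hatomic x hx fun hunit => hx0 (hred x hunit.1 hunit.2)

lemma AddIsStrongAtomIn.eq_of_nsmul_eq_nsmul {a b : G} (ha : AddIsStrongAtomIn M a)
    (hb : AddIsAtomIn M b) {p q : ℕ} (hq : 0 < q) (h : p • b = q • a) : b = a := by
  have hrep := ha.2 q hq (Multiset.replicate p b)
    (fun c hc => Multiset.eq_of_mem_replicate hc ▸ hb) (by rw [Multiset.sum_replicate, h])
  have hpq : p = q := by simpa using congrArg Multiset.card hrep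
  exact Multiset.eq_of_mem_replicate (hrep ▸ Multiset.mem_replicate.mpr ⟨by omega, rfl⟩)

lemma AddIsStrongAtomIn.exists_eq_nsmul_of_add_eq_nsmul (hred : ∀ x ∈ M, -x ∈ M → x = 0)
    (hatomic : AddIsAtomicIn M) {a x y : G} (ha : AddIsStrongAtomIn M a) (hx : x ∈ M)
    (hy : y ∈ M) {n : ℕ} (hxy : x + y = n • a) : ∃ j : ℕ, x = j • a := by
  rcases n.eq_zero_or_pos with rfl | hn
  · refine ⟨0, ?_⟩
    rw [zero_smul] at hxy ⊢
    exact hred x hx (by rwa [neg_eq_of_add_eq_zero_right hxy])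
  obtain ⟨s, hs, rfl⟩ := hatomic.exists_multiset_sum_eq hred hx
  obtain ⟨t, ht, rfl⟩ := hatomic.exists_multiset_sum_eq hred hy
  have hrep := ha.2 n hn (s + t) (by simpa [or_imp, forall_and] using ⟨hs, ht⟩)
    (by rwa [Multiset.sum_add])
  have hs_rep : s = Multiset.replicate (Multiset.card s) a := Multiset.eq_replicate_card.mpr
    fun b hb => Multiset.eq_of_mem_replicate (hrep ▸ Multiset.mem_add.mpr (Or.inl hb))
  exact ⟨Multiset.card s, by rw [hs_rep, Multiset.sum_replicate, Multiset.card_replicate]⟩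

end Monoid

lemma Rat.exists_nat_mul_eq_nat {r : ℚ} (hr : 0 ≤ r) : ∃ p q : ℕ, 0 < q ∧ (q : ℚ) * r = p :=
  ⟨r.num.toNat, r.den, r.den_pos, by
    rw [Rat.den_mul_eq_num, ← Int.cast_natCast, Int.toNat_of_nonneg (Rat.num_nonneg.mpr hr)]⟩

section IntegerPoints

variable {d : ℕ} {M : AddSubmonoid (Fin d → ℤ)}

lemma exists_nsmul_eq_coeZQ_of_mem_hull {x : Fin d → ℚ}
    (hx : x ∈ PointedCone.hull ℚ (coeZQ '' (M : Set (Fin d → ℤ)))) :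
    ∃ N : ℕ, 0 < N ∧ ∃ m ∈ M, N • x = coeZQ m := by
  induction hx using Submodule.span_induction with
  | mem x hx =>
    obtain ⟨m, hm, rfl⟩ := hx
    exact ⟨1, one_pos, m, hm, one_smul _ _⟩
  | zero => exact ⟨1, one_pos, 0, M.zero_mem, by simp⟩
  | add x y _ _ hx hy =>
    obtain ⟨N, hN, m, hm, hx⟩ := hx
    obtain ⟨N', hN', m', hm', hy⟩ := hy
    refine ⟨N * N', by positivity, N' • m + N • m', add_mem (nsmul_mem hm _) (nsmul_mem hm' _), ?_⟩
    rw [coeZQ_add, coeZQ_nsmul, coeZQ_nsmul, ← hx, ← hy, smul_smul, smul_smul, mul_comm N',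
      smul_add]
  | smul r x _ hx =>
    obtain ⟨N, hN, m, hm, hx⟩ := hx
    obtain ⟨p, q, hq, hqr⟩ := Rat.exists_nat_mul_eq_nat r.2
    refine ⟨q * N, by positivity, p • m, nsmul_mem hm _, ?_⟩
    calc (q * N) • (r • x) = ((q * r : ℚ) * N) • x := by
          rw [← Nonneg.coe_smul, ← Nat.cast_smul_eq_nsmul ℚ, smul_smul]; push_cast; ring_nf
      _ = coeZQ (p • m) := by
          rw [hqr, mul_smul, Nat.cast_smul_eq_nsmul, Nat.cast_smul_eq_nsmul, hx, coeZQ_nsmul]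

lemma AddIsStrongAtomIn.eq_of_coeZQ_eq_smul {a b : Fin d → ℤ} (ha : AddIsStrongAtomIn M a)
    (hb : AddIsAtomIn M b) {r : ℚ} (hr : 0 < r) (h : coeZQ b = r • coeZQ a) : b = a := by
  obtain ⟨p, q, hq, hqr⟩ := Rat.exists_nat_mul_eq_nat hr.le
  have hp : 0 < p := by exact_mod_cast hqr ▸ (by positivity : (0 : ℚ) < q * r)
  refine ha.eq_of_nsmul_eq_nsmul hb (p := q) hp (coeZQ_injective ?_)
  rw [coeZQ_nsmul, coeZQ_nsmul, h, ← Nat.cast_smul_eq_nsmul ℚ, ← Nat.cast_smul_eq_nsmul ℚ p,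
    smul_smul, hqr]

lemma AddIsStrongAtomIn.exists_eq_smul_of_add_eq (hred : ∀ x ∈ M, -x ∈ M → x = 0)
    (hatomic : AddIsAtomicIn M) {a : Fin d → ℤ} (ha : AddIsStrongAtomIn M a) {x y : Fin d → ℚ}
    (hx : x ∈ PointedCone.hull ℚ (coeZQ '' (M : Set (Fin d → ℤ))))
    (hy : y ∈ PointedCone.hull ℚ (coeZQ '' (M : Set (Fin d → ℤ))))
    (hxy : x + y = coeZQ a) : ∃ s : ℚ, x = s • coeZQ a := by
  obtain ⟨N, hN, m, hm, hmx⟩ := exists_nsmul_eq_coeZQ_of_mem_hull hx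
  obtain ⟨N', hN', m', hm', hmy⟩ := exists_nsmul_eq_coeZQ_of_mem_hull hy
  have hsum : N' • m + N • m' = (N' * N) • a := coeZQ_injective <| by
    rw [coeZQ_add, coeZQ_nsmul, coeZQ_nsmul, coeZQ_nsmul, ← hmx, ← hmy, smul_smul, smul_smul,
      mul_comm N, ← smul_add, hxy]
  obtain ⟨j, hj⟩ := ha.exists_eq_nsmul_of_add_eq_nsmul hred hatomic (nsmul_mem hm _)
    (nsmul_mem hm' _) hsum
  have hNx : ((N' * N : ℕ) : ℚ) • x = (j : ℚ) • coeZQ a := by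
    rw [Nat.cast_smul_eq_nsmul, Nat.cast_smul_eq_nsmul, mul_smul, hmx, ← coeZQ_nsmul, hj,
      coeZQ_nsmul]
  refine ⟨j / (N' * N : ℕ), ?_⟩
  rw [div_eq_inv_mul, mul_smul, ← hNx, inv_smul_smul₀ (by positivity)]

end IntegerPoints

/-- The extreme rays of a simplicial cone are its generating rays. -/
lemma LinearIndependent.exists_eq_pos_smul_of_mem_hull {𝕜 E ι : Type*} [Field 𝕜] [LinearOrder 𝕜]
    [IsStrictOrderedRing 𝕜] [AddCommGroup E] [Module 𝕜 E] [Fintype ι] {v : ι → E}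
    (hv : LinearIndependent 𝕜 v) {z : E} (hz : z ∈ PointedCone.hull 𝕜 (Set.range v))
    (hz0 : z ≠ 0)
    (hext : ∀ x ∈ PointedCone.hull 𝕜 (Set.range v), ∀ y ∈ PointedCone.hull 𝕜 (Set.range v),
      x + y = z → ∃ s : 𝕜, x = s • z) :
    ∃ i, ∃ c : 𝕜, 0 < c ∧ z = c • v i := by
  classical
  obtain ⟨c, rfl⟩ := (mem_span_range_iff_exists_fun _).mp hz
  obtain ⟨i, hci⟩ : ∃ i, c i ≠ 0 := by
    by_contra! h
    exact hz0 (by simp [h])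
  have hmem : ∀ j, c j • v j ∈ PointedCone.hull 𝕜 (Set.range v) :=
    fun j => smul_mem _ _ (subset_span ⟨j, rfl⟩)
  obtain ⟨s, hs⟩ := hext _ (hmem i) _ (sum_mem fun j _ => hmem j)
    (Finset.add_sum_erase _ (fun j => c j • v j) (Finset.mem_univ i))
  have hcoeff : Pi.single i (c i : 𝕜) = s • fun j => (c j : 𝕜) :=
    hv.fintypeLinearCombination_injective <| by
      rw [Fintype.linearCombination_apply_single, map_smul, Fintype.linearCombination_apply]
      exact hs
  have hs1 : s = 1 := by
    have := congrFun hcoeff i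
    simp only [Pi.single_eq_same, Pi.smul_apply, smul_eq_mul] at this
    exact (mul_eq_right₀ (Subtype.coe_ne_coe.mpr hci)).mp this.symm
  rw [hs1, one_smul] at hs
  exact ⟨i, c i, lt_of_le_of_ne (c i).2 (Subtype.coe_ne_coe.mpr hci).symm, hs.symm⟩

lemma AddIsStrongAtomIn.exists_coeZQ_eq_pos_smul {d k : ℕ} {M : AddSubmonoid (Fin d → ℤ)}
    (hred : ∀ x ∈ M, -x ∈ M → x = 0) (hatomic : AddIsAtomicIn M) {v : Fin k → Fin d → ℚ}
    (hv : LinearIndependent ℚ v)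
    (hcone : PointedCone.hull ℚ (coeZQ '' (M : Set (Fin d → ℤ))) =
      PointedCone.hull ℚ (Set.range v))
    {a : Fin d → ℤ} (ha : AddIsStrongAtomIn M a) :
    ∃ i, ∃ c : ℚ, 0 < c ∧ coeZQ a = c • v i := by
  have ha0 : coeZQ a ≠ 0 := by
    intro h
    obtain rfl : a = 0 := coeZQ_injective (h.trans coeZQ_zero.symm)
    exact ha.1.2.1 ⟨M.zero_mem, by simp⟩
  exact hv.exists_eq_pos_smul_of_mem_hull (hcone ▸ PointedCone.subset_hull ⟨a, ha.1.1, rfl⟩) ha0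
    fun x hx y hy hxy => ha.exists_eq_smul_of_add_eq hred hatomic (hcone ▸ hx) (hcone ▸ hy) hxy

/-- A reduced atomic submonoid of `ℤ^d` whose conic hull in `ℚ^d` is simplicial
(the conic hull of a linearly independent family) has at most `rank M` strong atoms,
where the rank of `M` is the dimension of the `ℚ`-span of `M` in `ℚ^d`
(i.e. of `ℚ ⊗ gp(M)`). -/
theorem strong_atoms_le_rank_of_simplicial {d : ℕ}
    (M : AddSubmonoid (Fin d → ℤ))
    (hred : ∀ x ∈ M, -x ∈ M → x = 0)
    (hatomic : AddIsAtomicIn M)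
    (hsimp : ∃ (k : ℕ) (v : Fin k → Fin d → ℚ), LinearIndependent ℚ v ∧
      conicHullQ (coeZQ '' (M : Set (Fin d → ℤ))) = conicHullQ (Set.range v)) :
    {a : Fin d → ℤ | AddIsStrongAtomIn M a}.Finite ∧
    {a : Fin d → ℤ | AddIsStrongAtomIn M a}.ncard ≤
      Module.finrank ℚ (Submodule.span ℚ (coeZQ '' (M : Set (Fin d → ℤ)))) := by
  obtain ⟨k, v, hv, hcone⟩ := hsimp
  replace hcone : PointedCone.hull ℚ (coeZQ '' (M : Set (Fin d → ℤ))) =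
      PointedCone.hull ℚ (Set.range v) :=
    SetLike.coe_injective (by rwa [← conicHullQ_eq_hull, ← conicHullQ_eq_hull])
  set S := {a : Fin d → ℤ | AddIsStrongAtomIn M a}
  choose ray c hc hray using fun a : S => a.2.exists_coeZQ_eq_pos_smul hred hatomic hv hcone
  have hinj : Function.Injective ray := fun a b hab => Subtype.ext <| Eq.symm <|
    a.2.eq_of_coeZQ_eq_smul b.2.1 (div_pos (hc b) (hc a)) <| by
      rw [hray a, hray b, hab, smul_smul, div_mul_cancel₀ _ (hc a).ne']
  have hspan : span ℚ (coeZQ '' (M : Set (Fin d → ℤ))) = span ℚ (Set.range v) := by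
    simpa only [span_span_of_tower] using
      congrArg (fun C : PointedCone ℚ (Fin d → ℚ) => span ℚ (C : Set (Fin d → ℚ))) hcone
  refine ⟨Set.finite_coe_iff.mp (Finite.of_injective ray hinj), ?_⟩
  rw [hspan, finrank_span_eq_card hv, Fintype.card_fin, ← Nat.card_coe_set_eq]
  simpa using Nat.card_le_card_of_injective ray hinj
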